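/- arXiv:1509.08325 — 2 statements merged into one kernel-verified Lean document; each statement's English description precedes it below -/
import Mathlib

section
/- Let B ⊆ A × A × A be a basic set such that either ((1,1,1) ∈ B and n_F ≥ 2) or ((2,2,2) ∈ B and n_G ≥ 2). Then the entropy limit exists and h(B) = ln 2, i.e., ln(ln c_n)/n → ln 2 as n → ∞. -/
open Filter Real

/-- The set of `n`-blocks of the binary Markov tree-shift over the alphabet `Fin 2`
(symbols `0,1` standing for `1,2`) with basic set `B` of 2-blocks `(i,j,k)`:
labelings of the binary words of length `< n` such that every node `v` of length
`≤ n-2`, together with its children `v0` and `v1`, forms a pattern in `B`. -/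
def Block2 (B : Finset (Fin 2 × Fin 2 × Fin 2)) (n : ℕ) :
    Set ({w : List (Fin 2) // w.length < n} → Fin 2) :=
  {u | ∀ (v : List (Fin 2)) (h : v.length + 2 ≤ n),
    (u ⟨v, by omega⟩,
     u ⟨v ++ [0], by simp; omega⟩,
     u ⟨v ++ [1], by simp; omega⟩) ∈ B}

/-- The `n`-blocks whose root is labeled `i`. -/
def BlockRoot2 (B : Finset (Fin 2 × Fin 2 × Fin 2)) (i : Fin 2) (n : ℕ) :
    Set ({w : List (Fin 2) // w.length < n} → Fin 2) :=
  {u | u ∈ Block2 B n ∧ ∀ h : 0 < n, u ⟨[], by simpa using h⟩ = i}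

/-- `n_F`: the number of pairs `(j,k)` with `(1,j,k) ∈ B` (symbol `1` is `0 : Fin 2`). -/
def nF (B : Finset (Fin 2 × Fin 2 × Fin 2)) : ℕ :=
  (Finset.univ.filter fun jk : Fin 2 × Fin 2 => (0, jk.1, jk.2) ∈ B).card

/-- `n_G`: the number of pairs `(j,k)` with `(2,j,k) ∈ B` (symbol `2` is `1 : Fin 2`). -/
def nG (B : Finset (Fin 2 × Fin 2 × Fin 2)) : ℕ :=
  (Finset.univ.filter fun jk : Fin 2 × Fin 2 => (1, jk.1, jk.2) ∈ B).card

/-- `F` dominates `G`: every pattern allowed under root symbol `2` is allowed under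
root symbol `1`. -/
def FDomG (B : Finset (Fin 2 × Fin 2 × Fin 2)) : Prop :=
  ∀ jk : Fin 2 × Fin 2, (1, jk.1, jk.2) ∈ B → (0, jk.1, jk.2) ∈ B

/-- `G` dominates `F`: every pattern allowed under root symbol `1` is allowed under
root symbol `2`. -/
def GDomF (B : Finset (Fin 2 × Fin 2 × Fin 2)) : Prop :=
  ∀ jk : Fin 2 × Fin 2, (0, jk.1, jk.2) ∈ B → (1, jk.1, jk.2) ∈ B

/-! An `n`-block labels the `2^n - 1` words of length `< n`, so `c_n ≤ 2^(2^n)`. Conversely,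
if `(i,i,i) ∈ B` and `N` child pairs are allowed below `i`, labelling every word of length
`≤ m` by `i` and choosing freely one allowed child pair below each of the `2^m` words of
length `m` gives `c_(m+2) ≥ N^(2^m)`. With `N ≥ 2` both bounds give
`ln ln c_n = n ln 2 + O(1)`. -/

open Finset

lemma tendsto_add_mul_div_natCast (a c : ℝ) :
    Tendsto (fun n : ℕ => (a + c * n) / n) atTop (nhds c) := by
  simpa using tendsto_add_mul_div_add_mul_atTop_nhds a 0 c one_ne_zero

lemma log_log_two_pow_two_pow (j : ℕ) :
    log (log ((2 : ℝ) ^ 2 ^ j)) = log (log 2) + log 2 * j := by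
  rw [Real.log_pow, Real.log_mul (by positivity) (Real.log_pos one_lt_two).ne', Nat.cast_pow,
    Nat.cast_ofNat, Real.log_pow]
  ring

lemma log_log_le_log_log {x y : ℝ} (hx : 1 < x) (hxy : x ≤ y) : log (log x) ≤ log (log y) :=
  Real.log_le_log (Real.log_pos hx) (Real.log_le_log (by linarith) hxy)

lemma one_lt_two_pow_two_pow (j : ℕ) : (1 : ℝ) < 2 ^ 2 ^ j :=
  one_lt_pow₀ one_lt_two (by positivity)

lemma tendsto_log_log_div_of_double_exponential_bounds {c : ℕ → ℝ} (k : ℕ)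
    (hlo : ∀ m, (2 : ℝ) ^ 2 ^ m ≤ c (m + k)) (hhi : ∀ n, c n ≤ 2 ^ 2 ^ n) :
    Tendsto (fun n : ℕ => log (log (c n)) / n) atTop (nhds (log 2)) := by
  refine tendsto_of_tendsto_of_tendsto_of_le_of_le'
    (tendsto_add_mul_div_natCast (log (log 2) - log 2 * k) (log 2))
    (tendsto_add_mul_div_natCast (log (log 2)) (log 2)) ?_ ?_ <;>
  filter_upwards [eventually_ge_atTop k] with n hn <;>
  obtain ⟨m, rfl⟩ := Nat.exists_eq_add_of_le' hn <;>
  refine div_le_div_of_nonneg_right ?_ (Nat.cast_nonneg _)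
  · calc log (log 2) - log 2 * k + log 2 * ↑(m + k)
        = log (log ((2 : ℝ) ^ 2 ^ m)) := by rw [log_log_two_pow_two_pow]; push_cast; ring
      _ ≤ log (log (c (m + k))) := log_log_le_log_log (one_lt_two_pow_two_pow m) (hlo m)
  · calc log (log (c (m + k)))
        ≤ log (log ((2 : ℝ) ^ 2 ^ (m + k))) :=
          log_log_le_log_log ((one_lt_two_pow_two_pow m).trans_le (hlo m)) (hhi _)
      _ = log (log 2) + log 2 * ↑(m + k) := log_log_two_pow_two_pow _

lemma Nat.card_list_length_lt (α : Type*) [Fintype α] (n : ℕ) :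
    Nat.card {l : List α // l.length < n} = ∑ k ∈ range n, Fintype.card α ^ k := by
  change Nat.card ({l : List α | l.length < n} : Set (List α)) = _
  rw [Nat.card_coe_set_eq]
  induction n with
  | zero => simp
  | succ n ih =>
    have hsplit : {l : List α | l.length < n + 1} =
        {l | l.length < n} ∪ {l | l.length = n} := by
      ext l; simp only [Set.mem_ofPred_eq, Set.mem_union]; omega
    rw [hsplit, Set.ncard_union_eq _ (List.finite_length_lt α n) (List.finite_length_eq α n),
      ih, sum_range_succ, ← Nat.card_coe_set_eq]
    · congr 1
      rw [← card_vector n, ← Nat.card_eq_fintype_card]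
      rfl
    · exact Set.disjoint_left.mpr fun l h₁ h₂ => h₁.ne h₂

instance (α : Type*) [Finite α] (n : ℕ) : Finite {l : List α // l.length < n} :=
  (List.finite_length_lt α n).to_subtype

section Blocks

variable (B : Finset (Fin 2 × Fin 2 × Fin 2))

lemma card_block2_le (n : ℕ) : Nat.card (Block2 B n) ≤ 2 ^ 2 ^ n :=
  calc Nat.card (Block2 B n)
      ≤ Nat.card ({w : List (Fin 2) // w.length < n} → Fin 2) :=
        Nat.card_le_card_of_injective _ Subtype.val_injective
    _ = 2 ^ ∑ k ∈ range n, 2 ^ k := by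
        rw [Nat.card_fun, Nat.card_list_length_lt, Nat.card_eq_fintype_card, Fintype.card_fin]
    _ ≤ 2 ^ 2 ^ n := Nat.pow_le_pow_right two_pos (Nat.geomSum_lt le_rfl (by simp)).le

def allowedPairs (i : Fin 2) : Finset (Fin 2 × Fin 2) :=
  univ.filter fun jk => (i, jk.1, jk.2) ∈ B

def Block2.ofLeafPairs (i : Fin 2) {m : ℕ} (ε : List.Vector (Fin 2) m → Fin 2 × Fin 2) :
    {w : List (Fin 2) // w.length < m + 2} → Fin 2 := fun w =>
  if h : w.1.length ≤ m then i
  else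
    have hw : w.1.dropLast.length = m := by have := w.2; simp only [List.length_dropLast]; omega
    if w.1.getLastD 0 = 0 then (ε ⟨w.1.dropLast, hw⟩).1 else (ε ⟨w.1.dropLast, hw⟩).2

namespace Block2.ofLeafPairs

variable {B} {i : Fin 2} {m : ℕ} {ε : List.Vector (Fin 2) m → Fin 2 × Fin 2}

lemma apply_of_length_le {w : List (Fin 2)} (hw : w.length < m + 2) (h : w.length ≤ m) :
    ofLeafPairs i ε ⟨w, hw⟩ = i :=
  dif_pos h

lemma apply_append_singleton (v : List.Vector (Fin 2) m) (b : Fin 2) :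
    ofLeafPairs i ε ⟨v.1 ++ [b], by simp [v.2]⟩ = if b = 0 then (ε v).1 else (ε v).2 := by
  have hlen : ¬(v.1 ++ [b]).length ≤ m := by simp [v.2]
  simp only [ofLeafPairs, dif_neg hlen, List.dropLast_concat, List.getLastD_concat]
  rfl

lemma mem_block2 (hii : (i, i, i) ∈ B) (hε : ∀ v, ε v ∈ allowedPairs B i) :
    ofLeafPairs i ε ∈ Block2 B (m + 2) := by
  intro v hv
  rw [apply_of_length_le _ (by omega)]
  rcases Nat.lt_or_ge v.length m with hlt | hge
  · rwa [apply_of_length_le _ (by simpa using hlt), apply_of_length_le _ (by simpa using hlt)]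
  · have := apply_append_singleton (i := i) (ε := ε) ⟨v, by omega⟩
    rw [this 0, this 1]
    simpa [allowedPairs] using hε ⟨v, by omega⟩

lemma injective : Function.Injective (ofLeafPairs (m := m) i) := by
  intro ε ε' h
  funext v
  have h0 := congrFun h ⟨v.1 ++ [0], by simp [v.2]⟩
  have h1 := congrFun h ⟨v.1 ++ [1], by simp [v.2]⟩
  rw [apply_append_singleton, apply_append_singleton] at h0 h1
  exact Prod.ext (by simpa using h0) (by simpa using h1)

end Block2.ofLeafPairs

lemma card_allowedPairs_pow_le_card_block2 {i : Fin 2} (hii : (i, i, i) ∈ B) (m : ℕ) :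
    (allowedPairs B i).card ^ 2 ^ m ≤ Nat.card (Block2 B (m + 2)) := by
  let f : (List.Vector (Fin 2) m → allowedPairs B i) → Block2 B (m + 2) := fun ε =>
    ⟨Block2.ofLeafPairs i fun v => (ε v).1, Block2.ofLeafPairs.mem_block2 hii fun v => (ε v).2⟩
  have hf : Function.Injective f := fun ε ε' h => by
    simp only [f, Subtype.mk.injEq] at h
    have hfst := Block2.ofLeafPairs.injective h
    exact funext fun v => Subtype.ext (congrFun hfst v)
  simpa [Nat.card_fun, card_vector] using Nat.card_le_card_of_injective f hf

end Blocks

/-- If `(1,1,1) ∈ B` with `n_F ≥ 2`, or `(2,2,2) ∈ B` with `n_G ≥ 2`, then the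
entropy limit exists and equals `ln 2`. -/
theorem entropy_eq_log_two_of_square_term (B : Finset (Fin 2 × Fin 2 × Fin 2))
    (hcase : ((0, 0, 0) ∈ B ∧ 2 ≤ nF B) ∨ ((1, 1, 1) ∈ B ∧ 2 ≤ nG B)) :
    Tendsto (fun n : ℕ => Real.log (Real.log (Nat.card (Block2 B n))) / n)
      atTop (nhds (Real.log 2)) := by
  obtain ⟨i, hii, hpairs⟩ : ∃ i, (i, i, i) ∈ B ∧ 2 ≤ (allowedPairs B i).card := by
    rcases hcase with h | h
    exacts [⟨0, h⟩, ⟨1, h⟩]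
  refine tendsto_log_log_div_of_double_exponential_bounds 2 (fun m => ?_) (fun n => ?_)
  · exact_mod_cast (Nat.pow_le_pow_left hpairs _).trans
      (card_allowedPairs_pow_le_card_block2 B hii m)
  · exact_mod_cast card_block2_le B n
end

section
/- Let B ⊆ A × A × A be a basic set whose entropy limit exists and is positive, say ln(ln c_n)/n → h with h > 0. If the periodic boundary entropy coincides with h, i.e., ln(ln |B_n^P|)/n → h as n → ∞, then there exists i ∈ {1,2} such that both (1,i,i) ∈ B and (2,i,i) ∈ B. -/
open Filter Real

/-- `n`-blocks satisfying the Neumann boundary condition: every node of length `n-1`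
(written `w ++ [j]` with `|w| = n-2`) carries the same label as its parent `w`. -/
def BlockN (B : Finset (Fin 2 × Fin 2 × Fin 2)) (n : ℕ) :
    Set ({w : List (Fin 2) // w.length < n} → Fin 2) :=
  {u | u ∈ Block2 B n ∧ ∀ (w : List (Fin 2)) (j : Fin 2) (h : w.length + 2 = n),
    u ⟨w ++ [j], by simp; omega⟩ = u ⟨w, by omega⟩}

/-- `n`-blocks satisfying the Dirichlet boundary condition with value `i`: every node
of length `n-1` is labeled `i`. -/
def BlockD (B : Finset (Fin 2 × Fin 2 × Fin 2)) (i : Fin 2) (n : ℕ) :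
    Set ({w : List (Fin 2) // w.length < n} → Fin 2) :=
  {u | u ∈ Block2 B n ∧ ∀ (w : List (Fin 2)) (h : w.length + 1 = n),
    u ⟨w, by omega⟩ = i}

/-- `n`-blocks satisfying the periodic boundary condition: every node of length `n-1`
carries the same label as the root. -/
def BlockP (B : Finset (Fin 2 × Fin 2 × Fin 2)) (n : ℕ) :
    Set ({w : List (Fin 2) // w.length < n} → Fin 2) :=
  {u | u ∈ Block2 B n ∧ ∀ (w : List (Fin 2)) (h : w.length + 1 = n),
    u ⟨w, by omega⟩ = u ⟨[], by simp; omega⟩}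

/-!
If no symbol `i` has both `(1,i,i)` and `(2,i,i)` in `B`, then the label of a node is determined
by the labels of its two children whenever these agree. In a periodic block the bottom level is
constant (equal to the root), so going upwards every level is constant and determined by the level
below it. Hence a periodic block is determined by its root label, `|B_n^P| ≤ 2`, and
`ln (ln |B_n^P|) ≤ 0`, which forces the periodic entropy to be `≤ 0`.
-/

namespace BlockP

variable {B : Finset (Fin 2 × Fin 2 × Fin 2)} {n : ℕ}

/-- `k + 1` is the distance from the level of `w` and `w'` down to level `n`, so `k = 0` is the
boundary level, where the periodic condition applies. -/
theorem apply_eq_of_root_eq (hB : ∀ a b c, (a, c, c) ∈ B → (b, c, c) ∈ B → a = b)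
    {u u' : {w : List (Fin 2) // w.length < n} → Fin 2} (hu : u ∈ BlockP B n)
    (hu' : u' ∈ BlockP B n) (h0 : 0 < n) (hroot : u ⟨[], h0⟩ = u' ⟨[], h0⟩) (k : ℕ) :
    ∀ (w w' : List (Fin 2)) (hw : w.length + (k + 1) = n) (hw' : w'.length + (k + 1) = n),
      u ⟨w, by omega⟩ = u' ⟨w', by omega⟩ := by
  induction k generalizing u u' with
  | zero =>
    intro w w' hw hw'
    rw [hu.2 w hw, hu'.2 w' hw']
    exact hroot
  | succ k ih =>
    intro w w' hw hw'
    have hlen : ∀ (v : List (Fin 2)) (j : Fin 2), v.length + (k + 2) = n →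
        (v ++ [j]).length + (k + 1) = n := fun v j hv => by simp; omega
    have hu01 := ih hu hu rfl (w ++ [0]) (w ++ [1]) (hlen w 0 hw) (hlen w 1 hw)
    have hu'01 := ih hu' hu' rfl (w' ++ [0]) (w' ++ [1]) (hlen w' 0 hw') (hlen w' 1 hw')
    have hu1u'1 := ih hu hu' hroot (w ++ [1]) (w' ++ [1]) (hlen w 1 hw) (hlen w' 1 hw')
    have hmem := hu.1 w (by omega)
    have hmem' := hu'.1 w' (by omega)
    rw [hu01, hu1u'1] at hmem
    rw [hu'01] at hmem'
    exact hB _ _ _ hmem hmem'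

theorem card_le_two (hB : ∀ a b c, (a, c, c) ∈ B → (b, c, c) ∈ B → a = b) (h0 : 0 < n) :
    Nat.card (BlockP B n) ≤ 2 := by
  have hinj : Function.Injective fun u : BlockP B n => u.1 ⟨[], h0⟩ := by
    refine fun u u' hroot => Subtype.ext <| funext fun ⟨w, hw⟩ => ?_
    exact apply_eq_of_root_eq hB u.2 u'.2 h0 hroot (n - 1 - w.length) w w (by omega) (by omega)
  simpa using Nat.card_le_card_of_injective _ hinj

end BlockP

theorem Real.log_log_natCast_nonpos {m : ℕ} (hm : m ≤ 2) : log (log m) ≤ 0 := by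
  refine log_nonpos (log_natCast_nonneg m) ?_
  rcases m.eq_zero_or_pos with rfl | hpos
  · simp
  · have := log_le_sub_one_of_pos (Nat.cast_pos.2 hpos : (0 : ℝ) < m)
    have : (m : ℝ) ≤ 2 := by exact_mod_cast hm
    linarith

theorem periodic_entropy_eq_necessary_general (B : Finset (Fin 2 × Fin 2 × Fin 2)) (h : ℝ)
    (hpos : 0 < h)
    (hP : Tendsto (fun n : ℕ => Real.log (Real.log (Nat.card (BlockP B n))) / n)
      atTop (nhds h)) :
    ∃ i : Fin 2, ((0 : Fin 2), i, i) ∈ B ∧ ((1 : Fin 2), i, i) ∈ B := by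
  by_contra hcon
  push Not at hcon
  have hB : ∀ a b c, (a, c, c) ∈ B → (b, c, c) ∈ B → a = b := by
    intro a b c ha hb
    fin_cases a <;> fin_cases b
    · rfl
    · exact absurd hb (hcon c ha)
    · exact absurd ha (hcon c hb)
    · rfl
  have hle : ∀ n ≥ 1, log (log (Nat.card (BlockP B n))) / n ≤ 0 := fun n hn =>
    div_nonpos_of_nonpos_of_nonneg (log_log_natCast_nonpos (BlockP.card_le_two hB hn))
      n.cast_nonneg
  have : h ≤ 0 := le_of_tendsto hP (eventually_atTop.2 ⟨1, hle⟩)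
  linarith

/-- Suppose the entropy limit of the binary Markov tree-shift `X^B` exists and is
positive, say equal to `h`. If the periodic boundary entropy also equals `h`, then
`(1,i,i), (2,i,i) ∈ B` for some symbol `i`. (Symbols `1,2` are `0,1 : Fin 2`.) -/
theorem periodic_entropy_eq_necessary (B : Finset (Fin 2 × Fin 2 × Fin 2)) (h : ℝ)
    (hpos : 0 < h)
    (hent : Tendsto (fun n : ℕ => Real.log (Real.log (Nat.card (Block2 B n))) / n)
      atTop (nhds h))
    (hP : Tendsto (fun n : ℕ => Real.log (Real.log (Nat.card (BlockP B n))) / n)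
      atTop (nhds h)) :
    ∃ i : Fin 2, ((0 : Fin 2), i, i) ∈ B ∧ ((1 : Fin 2), i, i) ∈ B :=
  periodic_entropy_eq_necessary_general B h hpos hP
end
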